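/- Let K, ρ > 0 and suppose α∞ > 0 satisfies K ρ ∫_1^∞ (1/z) e^{−ρ α∞ z} dz = e^{−ρ α∞}. Define P∞(S) = K e^{ρ α∞} ∫_1^∞ (1/z²) e^{−zρS} dz. Then P∞(α∞) = K − α∞ and P∞'(α∞) = −1. -/

import Mathlib

/-!
In terms of the generalized exponential integrals `E n x = ∫_1^∞ e^{-xz} z^{-n} dz`, the
hypothesis reads `K ρ E₁(ρA) = e^{-ρA}` and `P(S) = K e^{ρA} E₂(ρS)`. Integration by parts gives
`x E₁(x) + E₂(x) = e^{-x}`, and differentiation under the integral sign gives `E₂' = -E₁`;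
substituting the hypothesis into these two identities at `x = ρA` yields `P(A) = K - A` and
`P'(A) = -1`.
-/

open MeasureTheory Real Set Filter Topology

noncomputable def expIntegralE (n : ℕ) (x : ℝ) : ℝ :=
  ∫ z in Ioi (1 : ℝ), exp (-(x * z)) / z ^ n

lemma exp_div_pow_le {x z : ℝ} (n : ℕ) (hz : 1 ≤ z) :
    exp (-(x * z)) / z ^ n ≤ exp (-(x * z)) :=
  div_le_self (exp_pos _).le (one_le_pow₀ hz)

lemma integrableOn_exp_div_pow (n : ℕ) {x : ℝ} (hx : 0 < x) :
    IntegrableOn (fun z => exp (-(x * z)) / z ^ n) (Ioi 1) := by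
  refine (exp_neg_integrableOn_Ioi 1 hx).mono'
    (by fun_prop : Measurable _).aestronglyMeasurable ?_
  filter_upwards [ae_restrict_mem measurableSet_Ioi] with z (hz : 1 < z)
  rw [norm_of_nonneg (by positivity), neg_mul]
  exact exp_div_pow_le n hz.le

lemma hasDerivAt_neg_exp_div_pow (n : ℕ) (x : ℝ) {z : ℝ} (hz : z ≠ 0) :
    HasDerivAt (fun z => -(exp (-(x * z)) / z ^ n))
      (x * (exp (-(x * z)) / z ^ n) + n * (exp (-(x * z)) / z ^ (n + 1))) z := by
  have hexp : HasDerivAt (fun z => exp (-(x * z))) (exp (-(x * z)) * -x) z := by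
    simpa using ((hasDerivAt_id z).const_mul x).neg.exp
  refine (hexp.div (hasDerivAt_pow n z) (pow_ne_zero n hz)).neg.congr_deriv ?_
  rcases n with _ | m
  · simp [mul_comm]
  · rw [Nat.add_sub_cancel]
    field_simp
    ring

lemma tendsto_exp_div_pow_atTop (n : ℕ) {x : ℝ} (hx : 0 < x) :
    Tendsto (fun z => exp (-(x * z)) / z ^ n) atTop (𝓝 0) := by
  have hexp : Tendsto (fun z => exp (-(x * z))) atTop (𝓝 0) :=
    tendsto_exp_atBot.comp (tendsto_neg_atTop_atBot.comp (tendsto_id.const_mul_atTop hx))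
  refine squeeze_zero' ?_ ?_ hexp <;> filter_upwards [eventually_ge_atTop 1] with z hz
  · positivity
  · exact exp_div_pow_le n hz

theorem mul_expIntegralE_add_mul_expIntegralE_succ (n : ℕ) {x : ℝ} (hx : 0 < x) :
    x * expIntegralE n x + n * expIntegralE (n + 1) x = exp (-x) := by
  have hint := integrableOn_exp_div_pow n hx
  have hint' := integrableOn_exp_div_pow (n + 1) hx
  have hibp := integral_Ioi_of_hasDerivAt_of_tendsto (a := 1)
    (by fun_prop (disch := simp) :
      ContinuousWithinAt (fun z => -(exp (-(x * z)) / z ^ n)) (Ici 1) 1)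
    (fun z hz => hasDerivAt_neg_exp_div_pow n x (ne_of_gt (lt_trans one_pos hz)))
    ((hint.const_mul x).add (hint'.const_mul n))
    (tendsto_exp_div_pow_atTop n hx).neg
  rw [integral_add (hint.const_mul x) (hint'.const_mul n), integral_const_mul,
    integral_const_mul] at hibp
  simpa [expIntegralE] using hibp

theorem hasDerivAt_expIntegralE_succ (n : ℕ) {x : ℝ} (hx : 0 < x) :
    HasDerivAt (expIntegralE (n + 1)) (-expIntegralE n x) x := by
  have hball : Metric.ball x (x / 2) ∈ 𝓝 x := Metric.ball_mem_nhds x (half_pos hx)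
  have hderiv := hasDerivAt_integral_of_dominated_loc_of_deriv_le
    (F := fun y z => exp (-(y * z)) / z ^ (n + 1)) (F' := fun y z => -(exp (-(y * z)) / z ^ n))
    (bound := fun z => exp (-(x / 2) * z)) hball
    (Eventually.of_forall fun y => (by fun_prop : Measurable _).aestronglyMeasurable)
    (integrableOn_exp_div_pow (n + 1) hx)
    (by fun_prop : Measurable _).aestronglyMeasurable ?_
    (exp_neg_integrableOn_Ioi 1 (half_pos hx)) ?_
  · rw [integral_neg] at hderiv
    exact hderiv.2
  · filter_upwards [ae_restrict_mem measurableSet_Ioi] with z (hz : 1 < z) y hy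
    have hxy : x / 2 < y := by
      have := (abs_lt.mp (Real.dist_eq y x ▸ Metric.mem_ball.mp hy)).1
      linarith
    rw [norm_neg, norm_of_nonneg (by positivity)]
    refine (exp_div_pow_le n hz.le).trans (exp_le_exp.mpr ?_)
    nlinarith
  · filter_upwards [ae_restrict_mem measurableSet_Ioi] with z (hz : 1 < z) y _
    have hz0 : z ≠ 0 := by positivity
    have hexp : HasDerivAt (fun y => exp (-(y * z))) (exp (-(y * z)) * -z) y := by
      simpa using ((hasDerivAt_id y).mul_const z).neg.exp
    refine (hexp.div_const (z ^ (n + 1))).congr_deriv ?_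
    field_simp
    ring

theorem stmt_6_general (K ρ A : ℝ) (hρ : 0 < ρ) (hα : 0 < A)
    (heq : K * ρ * (∫ z in Set.Ioi (1 : ℝ), (1 / z) * Real.exp (-ρ * A * z)) =
      Real.exp (-ρ * A))
    (P : ℝ → ℝ)
    (hP : ∀ S : ℝ, P S =
      K * Real.exp (ρ * A) * ∫ z in Set.Ioi (1 : ℝ), (1 / z ^ 2) * Real.exp (-z * ρ * S)) :
    P A = K - A ∧ deriv P A = -1 := by
  have hb : 0 < ρ * A := mul_pos hρ hα
  have hE₁ : K * ρ * expIntegralE 1 (ρ * A) = exp (-(ρ * A)) := by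
    unfold expIntegralE
    convert heq using 4 <;> ring_nf
  have hP' : P = fun S => K * exp (ρ * A) * expIntegralE 2 (ρ * S) := by
    ext S
    rw [hP]
    congr 2 with z
    ring_nf
  have hrec : ρ * A * expIntegralE 1 (ρ * A) + expIntegralE 2 (ρ * A) = exp (-(ρ * A)) := by
    simpa using mul_expIntegralE_add_mul_expIntegralE_succ 1 hb
  have hderiv : HasDerivAt P (K * exp (ρ * A) * (-expIntegralE 1 (ρ * A) * ρ)) A := by
    rw [hP']
    exact (((hasDerivAt_expIntegralE_succ 1 hb).comp A
      ((hasDerivAt_id A).const_mul ρ)).const_mul _).congr_deriv (by ring)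
  have hexp : exp (ρ * A) * exp (-(ρ * A)) = 1 := by rw [← exp_add, add_neg_cancel, exp_zero]
  constructor
  · rw [hP']
    linear_combination K * exp (ρ * A) * hrec + (K - A) * hexp - A * exp (ρ * A) * hE₁
  · rw [hderiv.deriv]
    linear_combination (-exp (ρ * A)) * hE₁ - hexp

theorem stmt_6 (K ρ A : ℝ) (hK : 0 < K) (hρ : 0 < ρ) (hα : 0 < A)
    (heq : K * ρ * (∫ z in Set.Ioi (1 : ℝ), (1 / z) * Real.exp (-ρ * A * z)) =
      Real.exp (-ρ * A))
    (P : ℝ → ℝ)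
    (hP : ∀ S : ℝ, P S =
      K * Real.exp (ρ * A) * ∫ z in Set.Ioi (1 : ℝ), (1 / z ^ 2) * Real.exp (-z * ρ * S)) :
    P A = K - A ∧ deriv P A = -1 :=
  stmt_6_general K ρ A hρ hα heq P hP
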